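/- arXiv:2206.03158 — 2 statements merged into one kernel-verified Lean document; each statement's English description precedes it below -/
import Mathlib

section
/- Let (X, S(t)) be a dynamical system on a Banach space X possessing a compact global attractor 𝒜 (a compact set with S(t)𝒜 = 𝒜 for all t ≥ 0 which attracts every bounded set of X), and assume (X, S(t)) is quasi-stable on 𝒜 at some time t* > 0, with quasi-stability data (Z, K, n_Z, q), where L_K is a Lipschitz constant of K on 𝒜. Then 𝒜 has finite fractal (box-counting) dimension in X, and moreover dim_f^X(𝒜) ≤ [ln(2/(1+q))]^{-1} · ln m_Z(4L_K/(1−q)), where m_Z(R) denotes the maximal number of elements z_i in the ball {z ∈ Z : ‖z‖_Z ≤ R} satisfying n_Z(z_i − z_j) > 1 for i ≠ j. -/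
/-!
Split the attractor into pieces of diameter `ε`. Inside a piece `C`, take a maximal family of
points whose `K`-images are `δ`-separated for `n`, with `δ = (1 - q) ε / 4`: recentred and
rescaled by `δ⁻¹`, these images lie in the ball of radius `4 L / (1 - q)` and are `1`-separated,
so there are at most `m = m_Z(4 L / (1 - q))` of them, a finite number because `n` is compact.
Grouping the points of `C` around them and applying `S(t*)` gives at most `m` pieces of diameter
`q ε + 2 δ = (1 + q) / 2 · ε`, and `S(t*) A = A`. Iterating, `A` is covered by `m ^ k` sets of
diameter `((1 + q) / 2) ^ k ε₀`, whence `dim_f A ≤ ln m / ln (2 / (1 + q))`.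
-/

open Filter

/-- `coveringNumber A ε` is the minimal number of closed `ε`-balls needed to
cover `A`. -/
noncomputable def coveringNumber {X : Type*} [PseudoMetricSpace X]
    (A : Set X) (ε : ℝ) : ℕ :=
  sInf {n : ℕ | ∃ s : Finset X, s.card = n ∧ A ⊆ ⋃ x ∈ s, Metric.closedBall x ε}

/-- The fractal (box-counting) dimension of a set `A`:
`dim_f A = limsup_{ε → 0⁺} ln N(A,ε) / ln (1/ε)` (as an extended real). -/
noncomputable def fractalDim {X : Type*} [PseudoMetricSpace X] (A : Set X) : EReal :=
  Filter.limsup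
    (fun ε : ℝ => ((Real.log (coveringNumber A ε) / Real.log (1 / ε) : ℝ) : EReal))
    (nhdsWithin 0 (Set.Ioi (0 : ℝ)))

/-- `packingNumber n R` is the maximal number of elements of the closed `R`-ball
of `Z` whose pairwise differences have `n`-seminorm greater than `1`. -/
noncomputable def packingNumber {Z : Type*} [NormedAddCommGroup Z]
    (n : Z → ℝ) (R : ℝ) : ℕ :=
  sSup {k : ℕ | ∃ f : Fin k → Z, (∀ i, ‖f i‖ ≤ R) ∧
    ∀ i j, i ≠ j → 1 < n (f i - f j)}

open Set Topology Bornology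
open scoped NNReal

theorem Finset.exists_maximal_pairwise_subset {α : Type*} {r : α → α → Prop}
    (hr : ∀ a b, r a b → r b a) (hirr : ∀ a, ¬ r a a) (F : Set α) {m : ℕ}
    (hm : ∀ T : Finset α, ↑T ⊆ F → (T : Set α).Pairwise r → T.card ≤ m) :
    ∃ T : Finset α, ↑T ⊆ F ∧ T.card ≤ m ∧ ∀ y ∈ F, ∃ t ∈ T, ¬ r y t := by
  classical
  let 𝒮 : Set (Finset α) := {T | ↑T ⊆ F ∧ (T : Set α).Pairwise r}
  have hbdd : BddAbove (Finset.card '' 𝒮) := ⟨m, by rintro _ ⟨T, hT, rfl⟩; exact hm T hT.1 hT.2⟩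
  obtain ⟨T, ⟨hTF, hTr⟩, hTmax⟩ :=
    Nat.sSup_mem (⟨0, ∅, by simp [𝒮], rfl⟩ : (Finset.card '' 𝒮).Nonempty) hbdd
  refine ⟨T, hTF, hm T hTF hTr, fun y hy => ?_⟩
  by_contra! hfar
  have hyT : y ∉ T := fun hyT => hirr y (hfar y hyT)
  have hins : insert y T ∈ 𝒮 := by
    refine ⟨by simpa using Set.insert_subset_iff.2 ⟨hy, hTF⟩, ?_⟩
    rw [Finset.coe_insert, Set.pairwise_insert]
    exact ⟨hTr, fun t ht _ => ⟨hfar t ht, hr _ _ (hfar t ht)⟩⟩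
  have := le_csSup hbdd ⟨_, hins, rfl⟩
  rw [← hTmax, Finset.card_insert_of_notMem hyT] at this
  omega

def IsCompactSeminorm {Z : Type*} [SeminormedAddCommGroup Z] [NormedSpace ℝ Z]
    (p : Seminorm ℝ Z) : Prop :=
  ∀ u : ℕ → Z, IsBounded (range u) → ∃ φ : ℕ → ℕ, StrictMono φ ∧
    Tendsto (fun ij : ℕ × ℕ => p (u (φ ij.1) - u (φ ij.2))) atTop (𝓝 0)

namespace IsCompactSeminorm

variable {Z : Type*} [NormedAddCommGroup Z] [NormedSpace ℝ Z] {p : Seminorm ℝ Z}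

theorem exists_finset_net (hp : IsCompactSeminorm p) {B : Set Z} (hB : IsBounded B)
    {ε : ℝ} (hε : 0 < ε) : ∃ F : Finset Z, ∀ z ∈ B, ∃ y ∈ F, p (z - y) ≤ ε := by
  by_contra! hnet
  obtain ⟨u, huB, husep⟩ := exists_seq_of_forall_finset_exists (· ∈ B)
    (fun y z => ε < p (z - y)) fun F _ => hnet F
  obtain ⟨φ, hφ, hlim⟩ := hp u (hB.subset (range_subset_iff.2 huB))
  have hdiag : Tendsto (fun k => (k + 1, k)) atTop (atTop : Filter (ℕ × ℕ)) :=
    prod_atTop_atTop_eq (α := ℕ) (β := ℕ) ▸ (tendsto_add_atTop_nat 1).prodMk tendsto_id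
  obtain ⟨k, hk⟩ := ((hlim.comp hdiag).eventually_lt_const hε).exists
  exact (husep _ _ (hφ k.lt_succ_self)).not_gt hk

theorem bddAbove_packing (hp : IsCompactSeminorm p) (R : ℝ) :
    BddAbove {k : ℕ | ∃ f : Fin k → Z, (∀ i, ‖f i‖ ≤ R) ∧
      ∀ i j, i ≠ j → 1 < p (f i - f j)} := by
  obtain ⟨F, hF⟩ := hp.exists_finset_net (Metric.isBounded_closedBall (x := 0) (r := R))
    one_half_pos
  refine ⟨F.card, ?_⟩
  rintro k ⟨f, hfR, hfsep⟩
  choose g hgF hg using fun i => hF (f i) (mem_closedBall_zero_iff.2 (hfR i))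
  have hg_inj : Function.Injective g := by
    intro i j hij
    by_contra hne
    have htri : p (f i - f j) ≤ p (f i - g i) + p (f j - g j) := by
      simpa [hij] using map_sub_le_add p (f i - g i) (f j - g j)
    linarith [hfsep i j hne, hg i, hg j]
  simpa using Finset.card_le_card_of_injOn (s := Finset.univ) g (fun i _ => hgF i)
    hg_inj.injOn

theorem le_packingNumber (hp : IsCompactSeminorm p) {R : ℝ} {k : ℕ} (f : Fin k → Z)
    (hfR : ∀ i, ‖f i‖ ≤ R) (hfsep : ∀ i j, i ≠ j → 1 < p (f i - f j)) :
    k ≤ packingNumber p R :=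
  le_csSup (hp.bddAbove_packing R) ⟨f, hfR, hfsep⟩

theorem one_le_packingNumber (hp : IsCompactSeminorm p) {R : ℝ} (hR : 0 ≤ R) :
    1 ≤ packingNumber p R :=
  hp.le_packingNumber (fun _ => 0) (by simpa using hR)
    fun i j hij => absurd (Subsingleton.elim i j) hij

theorem card_le_packingNumber {X : Type*} [PseudoMetricSpace X] (hp : IsCompactSeminorm p)
    {K : X → Z} {L : ℝ≥0} {T : Finset X} (hK : LipschitzOnWith L K T) {ε δ : ℝ} (hδ : 0 < δ)
    (hT : ∀ a ∈ T, ∀ b ∈ T, dist a b ≤ ε)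
    (hsep : (T : Set X).Pairwise fun a b => δ < p (K a - K b)) :
    T.card ≤ packingNumber p (L * ε / δ) := by
  obtain rfl | ⟨a₀, ha₀⟩ := T.eq_empty_or_nonempty
  · simp
  let a : Fin T.card → X := fun j => T.equivFin.symm j
  have haT (j) : a j ∈ T := (T.equivFin.symm j).2
  refine hp.le_packingNumber (fun j => δ⁻¹ • (K (a j) - K a₀)) (fun j => ?_) fun i j hij => ?_
  · calc ‖δ⁻¹ • (K (a j) - K a₀)‖ = δ⁻¹ * dist (K (a j)) (K a₀) := by
          rw [norm_smul, Real.norm_of_nonneg (inv_pos.2 hδ).le, dist_eq_norm]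
      _ ≤ δ⁻¹ * (L * ε) := by
          gcongr
          exact (hK.dist_le_mul _ (haT j) _ ha₀).trans (by gcongr; exact hT _ (haT j) _ ha₀)
      _ = L * ε / δ := by ring
  · have hne : a i ≠ a j := fun h => hij (T.equivFin.symm.injective (Subtype.ext h))
    rw [← smul_sub, sub_sub_sub_cancel_right, map_smul_eq_mul,
      Real.norm_of_nonneg (inv_pos.2 hδ).le, one_lt_inv_mul₀ hδ]
    exact hsep (haT i) (haT j) hne

end IsCompactSeminorm

theorem exists_refinement_image_of_quasiStable {X Z : Type*} [PseudoMetricSpace X]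
    [NormedAddCommGroup Z] [NormedSpace ℝ Z] {p : Seminorm ℝ Z} (hp : IsCompactSeminorm p) (V : X → X) {A : Set X}
    {K : X → Z} {L : ℝ≥0} (hK : LipschitzOnWith L K A) {q : ℝ} (hq0 : 0 ≤ q) (hq1 : q < 1)
    (hV : ∀ y₁ ∈ A, ∀ y₂ ∈ A, dist (V y₁) (V y₂) ≤ q * dist y₁ y₂ + p (K y₁ - K y₂))
    {C : Set X} (hCA : C ⊆ A) {ε : ℝ} (hε : 0 < ε) (hC : ∀ x ∈ C, ∀ y ∈ C, dist x y ≤ ε) :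
    ∃ 𝒞 : Finset (Set X), 𝒞.card ≤ packingNumber p (4 * L / (1 - q)) ∧
      V '' C ⊆ ⋃₀ ↑𝒞 ∧ ∀ P ∈ 𝒞, P ⊆ V '' C ∧ ∀ x ∈ P, ∀ y ∈ P, dist x y ≤ (1 + q) / 2 * ε := by
  classical
  set δ := (1 - q) * ε / 4 with hδ_def
  have hδ : 0 < δ := by have := sub_pos.2 hq1; positivity
  have hR : (L : ℝ) * ε / δ = 4 * L / (1 - q) := by
    rw [hδ_def]; field_simp
  obtain ⟨T, hTC, hTcard, hTnet⟩ := Finset.exists_maximal_pairwise_subset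
    (r := fun a b => δ < p (K a - K b)) (fun a b => by simp only [map_sub_rev p (K a)]; exact id)
    (fun a => by simpa using hδ.le) C fun T hTC hTsep => hR ▸
      hp.card_le_packingNumber (hK.mono (hTC.trans hCA)) hδ
        (fun a ha b hb => hC a (hTC ha) b (hTC hb)) hTsep
  let piece : X → Set X := fun t => V '' {y ∈ C | p (K y - K t) ≤ δ}
  refine ⟨T.image piece, Finset.card_image_le.trans hTcard, ?_, ?_⟩
  · rintro _ ⟨y, hy, rfl⟩
    obtain ⟨t, ht, hyt⟩ := hTnet y hy
    exact mem_sUnion.2 ⟨piece t, by simpa using ⟨t, ht, rfl⟩, y, ⟨hy, not_lt.1 hyt⟩, rfl⟩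
  · simp only [Finset.mem_image]
    rintro _ ⟨t, -, rfl⟩
    refine ⟨image_mono (sep_subset _ _), ?_⟩
    rintro _ ⟨y, ⟨hy, hyt⟩, rfl⟩ _ ⟨y', ⟨hy', hy't⟩, rfl⟩
    have hKy : p (K y - K y') ≤ 2 * δ := by
      have := map_sub_le_add p (K y - K t) (K y' - K t)
      rw [sub_sub_sub_cancel_right] at this
      linarith
    calc dist (V y) (V y') ≤ q * dist y y' + p (K y - K y') := hV y (hCA hy) y' (hCA hy')
      _ ≤ q * ε + 2 * δ := by gcongr; exact hC y hy y' hy'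
      _ = (1 + q) / 2 * ε := by rw [hδ_def]; ring

section Covering

variable {X : Type*} [PseudoMetricSpace X]

theorem coveringNumber_le_card_of_subset {A : Set X} {r : ℝ} (s : Finset X)
    (hs : A ⊆ ⋃ x ∈ s, Metric.closedBall x r) : coveringNumber A r ≤ s.card :=
  Nat.sInf_le ⟨s, rfl, hs⟩

theorem coveringNumber_le_card {A : Set X} {𝒞 : Finset (Set X)} (hA : A ⊆ ⋃₀ ↑𝒞) {r : ℝ}
    (h𝒞 : ∀ C ∈ 𝒞, ∀ x ∈ C, ∀ y ∈ C, dist x y ≤ r) : coveringNumber A r ≤ 𝒞.card := by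
  classical
  obtain rfl | ⟨a₀, -⟩ := A.eq_empty_or_nonempty
  · exact (coveringNumber_le_card_of_subset ∅ (by simp)).trans (Nat.zero_le _)
  have : Nonempty X := ⟨a₀⟩
  refine (coveringNumber_le_card_of_subset (𝒞.image fun C => Classical.epsilon (· ∈ C))
    fun a ha => ?_).trans Finset.card_image_le
  obtain ⟨C, hC, haC⟩ := mem_sUnion.1 (hA ha)
  exact mem_biUnion (Finset.mem_image_of_mem _ hC)
    (h𝒞 C hC a haC _ (Classical.epsilon_spec ⟨a, haC⟩))

theorem exists_cover_pow_of_refinement (V : X → X) {A : Set X} (hVA : V '' A = A) {m : ℕ}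
    {θ ε₀ : ℝ} (hθ : 0 < θ) (hε₀ : 0 < ε₀) (hA : ∀ x ∈ A, ∀ y ∈ A, dist x y ≤ ε₀)
    (hrefine : ∀ C ⊆ A, ∀ ε > 0, (∀ x ∈ C, ∀ y ∈ C, dist x y ≤ ε) →
      ∃ 𝒞 : Finset (Set X), 𝒞.card ≤ m ∧ V '' C ⊆ ⋃₀ ↑𝒞 ∧
        ∀ P ∈ 𝒞, P ⊆ V '' C ∧ ∀ x ∈ P, ∀ y ∈ P, dist x y ≤ θ * ε) (k : ℕ) :
    ∃ 𝒞 : Finset (Set X), 𝒞.card ≤ m ^ k ∧ A ⊆ ⋃₀ ↑𝒞 ∧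
      ∀ C ∈ 𝒞, C ⊆ A ∧ ∀ x ∈ C, ∀ y ∈ C, dist x y ≤ θ ^ k * ε₀ := by
  classical
  induction k with
  | zero => exact ⟨{A}, by simp, by simp, by simpa using hA⟩
  | succ k ih =>
    obtain ⟨𝒞, hcard, hcov, h𝒞⟩ := ih
    choose! 𝒟 h𝒟card h𝒟cov h𝒟 using fun C (hC : C ∈ 𝒞) =>
      hrefine C (h𝒞 C hC).1 (θ ^ k * ε₀) (by positivity) (h𝒞 C hC).2
    refine ⟨𝒞.biUnion 𝒟, ?_, ?_, ?_⟩
    · calc (𝒞.biUnion 𝒟).card ≤ ∑ C ∈ 𝒞, (𝒟 C).card := Finset.card_biUnion_le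
        _ ≤ 𝒞.card * m := Finset.sum_le_card_nsmul _ _ _ h𝒟card
        _ ≤ m ^ (k + 1) := by rw [pow_succ]; gcongr
    · intro a ha
      rw [← hVA] at ha
      obtain ⟨y, hy, rfl⟩ := ha
      obtain ⟨C, hC, hyC⟩ := mem_sUnion.1 (hcov hy)
      obtain ⟨P, hP, hyP⟩ := mem_sUnion.1 (h𝒟cov C hC (mem_image_of_mem V hyC))
      exact mem_sUnion.2 ⟨P, Finset.mem_biUnion.2 ⟨C, hC, hP⟩, hyP⟩
    · simp only [Finset.mem_biUnion]
      rintro P ⟨C, hC, hP⟩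
      refine ⟨(h𝒟 C hC P hP).1.trans (hVA ▸ image_mono (h𝒞 C hC).1), ?_⟩
      simpa [pow_succ, mul_comm, mul_left_comm] using (h𝒟 C hC P hP).2

end Covering

section Dimension

variable {X : Type*} [PseudoMetricSpace X] {A : Set X} {m : ℕ} {θ ε₀ : ℝ}

theorem log_coveringNumber_le (hm : 1 ≤ m) (hθ0 : 0 < θ) (hθ1 : θ < 1)
    (hN : ∀ (k : ℕ) (ε : ℝ), θ ^ k * ε₀ ≤ ε → coveringNumber A ε ≤ m ^ k)
    {ε : ℝ} (hε : 0 < ε) (hεε₀ : ε ≤ ε₀) :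
    Real.log (coveringNumber A ε) ≤ (Real.log (ε₀ / ε) / Real.log θ⁻¹ + 1) * Real.log m := by
  have ha : 0 < Real.log θ⁻¹ := Real.log_pos ((one_lt_inv₀ hθ0).2 hθ1)
  have hx : 0 ≤ Real.log (ε₀ / ε) / Real.log θ⁻¹ :=
    div_nonneg (Real.log_nonneg ((one_le_div hε).2 hεε₀)) ha.le
  set k := ⌈Real.log (ε₀ / ε) / Real.log θ⁻¹⌉₊
  have hk : θ ^ k * ε₀ ≤ ε := by
    have hlog : Real.log (ε₀ / ε) ≤ Real.log (θ⁻¹ ^ k) := by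
      rw [Real.log_pow]
      exact (div_le_iff₀ ha).1 (Nat.le_ceil _)
    have := (Real.log_le_log_iff (div_pos (hε.trans_le hεε₀) hε) (by positivity)).1 hlog
    rw [inv_pow, div_le_iff₀ hε] at this
    calc θ ^ k * ε₀ ≤ θ ^ k * ((θ ^ k)⁻¹ * ε) := by gcongr
      _ = ε := by field_simp
  have hlogN : Real.log (coveringNumber A ε) ≤ k * Real.log m := by
    rcases (coveringNumber A ε).eq_zero_or_pos with h0 | hpos
    · rw [h0, Nat.cast_zero, Real.log_zero]
      exact mul_nonneg k.cast_nonneg (Real.log_nonneg (by exact_mod_cast hm))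
    · rw [← Real.log_pow]
      exact Real.log_le_log (by exact_mod_cast hpos) (by exact_mod_cast hN k ε hk)
  exact hlogN.trans (mul_le_mul_of_nonneg_right (Nat.ceil_lt_add_one hx).le
    (Real.log_nonneg (by exact_mod_cast hm)))

theorem fractalDim_le_of_coveringNumber_le_pow (hm : 1 ≤ m) (hθ0 : 0 < θ) (hθ1 : θ < 1)
    (hε₀ : 0 < ε₀) (hN : ∀ (k : ℕ) (ε : ℝ), θ ^ k * ε₀ ≤ ε → coveringNumber A ε ≤ m ^ k) :
    fractalDim A ≤ ((Real.log m / Real.log θ⁻¹ : ℝ) : EReal) := by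
  set c := Real.log m / Real.log θ⁻¹
  set D := (Real.log ε₀ / Real.log θ⁻¹ + 1) * Real.log m
  have hbound : ∀ᶠ ε in 𝓝[>] 0,
      ((Real.log (coveringNumber A ε) / Real.log (1 / ε) : ℝ) : EReal) ≤
        ((c + D / Real.log (1 / ε) : ℝ) : EReal) := by
    filter_upwards [Ioo_mem_nhdsGT (lt_min hε₀ one_pos)] with ε ⟨hε, hεlt⟩
    have hlog : 0 < Real.log (1 / ε) :=
      Real.log_pos ((one_lt_div hε).2 (hεlt.trans_le (min_le_right _ _)))
    have hsplit : Real.log (ε₀ / ε) = Real.log ε₀ + Real.log (1 / ε) := by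
      rw [← Real.log_mul hε₀.ne' (by positivity), mul_one_div]
    rw [EReal.coe_le_coe_iff, div_le_iff₀ hlog]
    calc Real.log (coveringNumber A ε)
        ≤ (Real.log (ε₀ / ε) / Real.log θ⁻¹ + 1) * Real.log m :=
          log_coveringNumber_le hm hθ0 hθ1 hN hε (hεlt.le.trans (min_le_left _ _))
      _ = (c + D / Real.log (1 / ε)) * Real.log (1 / ε) := by
          rw [hsplit]; simp only [c, D]; field_simp; ring
  have hlim : Tendsto (fun ε => c + D / Real.log (1 / ε)) (𝓝[>] 0) (𝓝 c) := by
    have hinv : Tendsto (fun ε : ℝ => 1 / ε) (𝓝[>] 0) atTop := by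
      simpa only [one_div] using tendsto_inv_nhdsGT_zero
    simpa only [add_zero, Function.comp_def] using
      tendsto_const_nhds.add (tendsto_const_nhds.div_atTop (Real.tendsto_log_atTop.comp hinv))
  exact (limsup_le_limsup hbound).trans (EReal.tendsto_coe.2 hlim).limsup_eq.le

end Dimension

theorem fractalDim_le_of_quasiStable_map {X Z : Type*} [PseudoMetricSpace X]
    [NormedAddCommGroup Z] [NormedSpace ℝ Z] {p : Seminorm ℝ Z} (hp : IsCompactSeminorm p)
    (V : X → X) {A : Set X} (hA : IsBounded A) (hVA : V '' A = A) {K : X → Z} {L : ℝ≥0}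
    (hK : LipschitzOnWith L K A) {q : ℝ} (hq0 : 0 ≤ q) (hq1 : q < 1)
    (hV : ∀ y₁ ∈ A, ∀ y₂ ∈ A, dist (V y₁) (V y₂) ≤ q * dist y₁ y₂ + p (K y₁ - K y₂)) :
    fractalDim A ≤
      ((Real.log (packingNumber p (4 * L / (1 - q))) / Real.log (2 / (1 + q)) : ℝ) : EReal) := by
  have hq : 0 < 1 - q := sub_pos.2 hq1
  obtain ⟨C₀, hC₀⟩ := Metric.isBounded_iff.1 hA
  have hA₀ : ∀ x ∈ A, ∀ y ∈ A, dist x y ≤ max C₀ 1 :=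
    fun x hx y hy => (hC₀ hx hy).trans (le_max_left _ _)
  rw [← inv_div (1 + q) 2]
  refine fractalDim_le_of_coveringNumber_le_pow (A := A) (θ := (1 + q) / 2) (ε₀ := max C₀ 1)
    (hp.one_le_packingNumber (by positivity)) (by linarith) (by linarith) (by positivity)
    fun k ε hε => ?_
  obtain ⟨𝒞, hcard, hcov, h𝒞⟩ := exists_cover_pow_of_refinement V hVA (by linarith)
    (by positivity) hA₀ (fun C hCA ε hε hC =>
      exists_refinement_image_of_quasiStable hp V hK hq0 hq1 hV hCA hε hC) k
  exact (coveringNumber_le_card hcov fun C hC x hx y hy =>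
    ((h𝒞 C hC).2 x hx y hy).trans hε).trans hcard

theorem fractalDim_attractor_le_of_quasiStable_general {X : Type*}
    [NormedAddCommGroup X]
    {Z : Type*} [NormedAddCommGroup Z] [NormedSpace ℝ Z]
    (S : ℝ → X → X)
    -- `A` is a compact global attractor
    (A : Set X) (hAcpt : IsCompact A)
    (hAinv : ∀ t : ℝ, 0 ≤ t → S t '' A = A)
    -- quasi-stability data on `A` at time `tStar`
    (tStar : ℝ) (htStar : 0 < tStar)
    (K : X → Z) (L : NNReal) (hK : LipschitzOnWith L K A)
    (n : Z → ℝ)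
    (hnadd : ∀ z w, n (z + w) ≤ n z + n w)
    (hnsmul : ∀ (c : ℝ) (z : Z), n (c • z) = |c| * n z)
    (hncpt : ∀ u : ℕ → Z, Bornology.IsBounded (Set.range u) →
      ∃ φ : ℕ → ℕ, StrictMono φ ∧
        Tendsto (fun p : ℕ × ℕ => n (u (φ p.1) - u (φ p.2))) atTop (nhds 0))
    (q : ℝ) (hq0 : 0 ≤ q) (hq1 : q < 1)
    (hest : ∀ y₁ ∈ A, ∀ y₂ ∈ A,
      ‖S tStar y₁ - S tStar y₂‖ ≤ q * ‖y₁ - y₂‖ + n (K y₁ - K y₂)) :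
    fractalDim A < ⊤ ∧
    fractalDim A ≤
      ((Real.log (packingNumber n (4 * (L : ℝ) / (1 - q))) /
        Real.log (2 / (1 + q)) : ℝ) : EReal) := by
  let p : Seminorm ℝ Z := .of n hnadd fun c z => by rw [hnsmul, Real.norm_eq_abs]
  have hdim : fractalDim A ≤ _ :=
    fractalDim_le_of_quasiStable_map (p := p) hncpt (S tStar) hAcpt.isBounded
      (hAinv tStar htStar.le) hK hq0 hq1 fun y₁ hy₁ y₂ hy₂ => by
        rw [dist_eq_norm, dist_eq_norm]; exact hest y₁ hy₁ y₂ hy₂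
  exact ⟨hdim.trans_lt (EReal.coe_lt_top _), hdim⟩

/-- Theorem 3.4.5 of Chueshov: if a dynamical system has a compact global
attractor `A` and is quasi-stable on `A` (with data `(tStar, Z, K, L, n, q)`),
then `A` has finite fractal dimension in `X`, bounded by
`[ln (2/(1+q))]⁻¹ · ln m_Z(4L/(1−q))`. -/
theorem fractalDim_attractor_le_of_quasiStable {X : Type*}
    [NormedAddCommGroup X] [NormedSpace ℝ X] [CompleteSpace X]
    {Z : Type*} [NormedAddCommGroup Z] [NormedSpace ℝ Z] [CompleteSpace Z]
    (S : ℝ → X → X)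
    (hS0 : S 0 = id)
    (hSadd : ∀ t s : ℝ, 0 ≤ t → 0 ≤ s → S (t + s) = S t ∘ S s)
    (hScont : Continuous fun p : ℝ × X => S p.1 p.2)
    -- `A` is a compact global attractor
    (A : Set X) (hAcpt : IsCompact A)
    (hAinv : ∀ t : ℝ, 0 ≤ t → S t '' A = A)
    (hAattr : ∀ B : Set X, Bornology.IsBounded B →
      ∀ ε : ℝ, 0 < ε → ∃ T : ℝ, ∀ t : ℝ, T ≤ t →
        ∀ x ∈ B, Metric.infDist (S t x) A < ε)
    -- quasi-stability data on `A` at time `tStar`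
    (tStar : ℝ) (htStar : 0 < tStar)
    (K : X → Z) (L : NNReal) (hL : 0 < L) (hK : LipschitzOnWith L K A)
    (n : Z → ℝ)
    (hn0 : ∀ z, 0 ≤ n z)
    (hnadd : ∀ z w, n (z + w) ≤ n z + n w)
    (hnsmul : ∀ (c : ℝ) (z : Z), n (c • z) = |c| * n z)
    (hncpt : ∀ u : ℕ → Z, Bornology.IsBounded (Set.range u) →
      ∃ φ : ℕ → ℕ, StrictMono φ ∧
        Tendsto (fun p : ℕ × ℕ => n (u (φ p.1) - u (φ p.2))) atTop (nhds 0))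
    (q : ℝ) (hq0 : 0 ≤ q) (hq1 : q < 1)
    (hest : ∀ y₁ ∈ A, ∀ y₂ ∈ A,
      ‖S tStar y₁ - S tStar y₂‖ ≤ q * ‖y₁ - y₂‖ + n (K y₁ - K y₂)) :
    fractalDim A < ⊤ ∧
    fractalDim A ≤
      ((Real.log (packingNumber n (4 * (L : ℝ) / (1 - q))) /
        Real.log (2 / (1 + q)) : ℝ) : EReal) :=
  fractalDim_attractor_le_of_quasiStable_general S A hAcpt hAinv tStar htStar K L hK n hnadd hnsmul
    hncpt q hq0 hq1 hest
end

section
/- Let Φ: [0,∞) → [0,∞) be a differentiable function satisfying Φ'(t) + 2αΦ(t) ≤ h(t)Φ(t) + k for all t ≥ 0, where α > 0, k ≥ 0, and h: [0,∞) → ℝ is locally integrable with ∫_s^t h(τ)dτ ≤ α(t−s) + m for all t ≥ s ≥ 0 and some m ≥ 0. Then Φ(t) ≤ Φ(0)·e^m·e^{−αt} + k·e^m/α for all t ≥ 0. -/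
/-!
With `H u = ∫₀ᵘ h`, the integrating factor `exp (2αu - H u)` turns the inequality into
`(Φ · exp (2αu - H u))' ≤ k · exp (2αu - H u)`, and the hypothesis on `∫ h` bounds each resulting
weight `exp ((H t - H u) - 2α(t - u))` by `eᵐ e^{-α(t-u)}`. Since `h` is merely integrable, `H` need
not be differentiable, so one first replaces `h` by a continuous `g` with `∫₀ᵗ |h - g| ≤ ε`; the
error term `(h - g) Φ` costs `O(ε · max Φ)`, and one lets `ε → 0`.
-/

open MeasureTheory Set Real Filter Topology

theorem IntervalIntegrable.exists_continuous_integral_abs_sub_le {h : ℝ → ℝ} {a b ε : ℝ}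
    (hh : IntervalIntegrable h volume a b) (hab : a ≤ b) (hε : 0 < ε) :
    ∃ g : ℝ → ℝ, Continuous g ∧ ∫ u in a..b, |h u - g u| ≤ ε := by
  have hint : Integrable ((Ioc a b).indicator h) :=
    ((intervalIntegrable_iff_integrableOn_Ioc_of_le hab).1 hh).integrable_indicator
      measurableSet_Ioc
  obtain ⟨g, -, hgh, hg, hgint⟩ := hint.exists_hasCompactSupport_integral_sub_le hε
  refine ⟨g, hg, ?_⟩
  calc ∫ u in a..b, |h u - g u|
      = ∫ u in Ioc a b, ‖(Ioc a b).indicator h u - g u‖ := by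
        rw [intervalIntegral.integral_of_le hab]
        refine setIntegral_congr_fun measurableSet_Ioc fun u hu => ?_
        rw [indicator_of_mem hu, Real.norm_eq_abs]
    _ ≤ ∫ u, ‖(Ioc a b).indicator h u - g u‖ :=
        setIntegral_le_integral (hint.sub hgint).norm (.of_forall fun _ => norm_nonneg _)
    _ ≤ ε := hgh

theorem intervalIntegral.integral_le_integral_add_of_integral_abs_sub_le {f g : ℝ → ℝ}
    {a b ε : ℝ} (hab : a ≤ b) (hf : IntervalIntegrable f volume a b)
    (hg : IntervalIntegrable g volume a b) (hfg : ∫ u in a..b, |f u - g u| ≤ ε) :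
    ∫ u in a..b, g u ≤ (∫ u in a..b, f u) + ε := by
  have : ∫ u in a..b, (g u - f u) ≤ ∫ u in a..b, |f u - g u| :=
    intervalIntegral.integral_mono_on hab (hg.sub hf) (hf.sub hg).abs
      fun u _ => abs_sub_comm (f u) (g u) ▸ le_abs_self _
  rw [intervalIntegral.integral_sub hg hf] at this
  linarith

theorem integral_exp_mul_sub_le {α : ℝ} (hα : 0 < α) (s t : ℝ) :
    ∫ u in s..t, exp (α * u - α * t) ≤ α⁻¹ := by
  rw [intervalIntegral.integral_comp_mul_sub (f := exp) hα.ne', integral_exp, sub_self, exp_zero,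
    smul_eq_mul]
  exact mul_le_of_le_one_right (inv_nonneg.2 hα.le) (sub_le_self _ (exp_pos _).le)

theorem le_exp_integral_mul_add_integral_of_hasDerivWithinAt {Φ Φ' a b : ℝ → ℝ} {s t : ℝ}
    (hst : s ≤ t) (ha : Continuous a) (hb : IntervalIntegrable b volume s t)
    (hΦ : ContinuousOn Φ (Icc s t))
    (hΦ' : ∀ u ∈ Ioo s t, HasDerivWithinAt Φ (Φ' u) (Ioi u) u)
    (hle : ∀ u ∈ Ioo s t, Φ' u ≤ a u * Φ u + b u) :
    Φ t ≤ exp (∫ τ in s..t, a τ) * Φ s + ∫ u in s..t, exp (∫ τ in u..t, a τ) * b u := by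
  set A : ℝ → ℝ := fun u => ∫ τ in s..u, a τ
  have hA : ∀ u, HasDerivAt A (a u) u := fun u => (ha.integral_hasStrictDerivAt s u).hasDerivAt
  have hAcont : Continuous A := continuous_iff_continuousAt.2 fun u => (hA u).continuousAt
  have hAs : A s = 0 := intervalIntegral.integral_same
  have hweight : ∀ u, exp (∫ τ in u..t, a τ) = exp (A t) * exp (-A u) := fun u => by
    rw [← exp_add, ← sub_eq_add_neg, intervalIntegral.integral_interval_sub_left
      (ha.intervalIntegrable _ _) (ha.intervalIntegrable _ _)]
  have hproduct : exp (-A t) * Φ t - exp (-A s) * Φ s ≤ ∫ u in s..t, exp (-A u) * b u := by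
    refine intervalIntegral.sub_le_integral_of_hasDeriv_right_of_le hst
      ((continuous_exp.comp hAcont.neg).continuousOn.mul hΦ)
      (fun u hu => (hA u).neg.exp.hasDerivWithinAt.mul (hΦ' u hu)) ?_ fun u hu => ?_
    · rw [← uIcc_of_le hst, ← intervalIntegrable_iff']
      exact hb.continuousOn_mul (continuous_exp.comp hAcont.neg).continuousOn
    · have := mul_le_mul_of_nonneg_left (hle u hu) (exp_pos (-A u)).le
      simp only [Pi.neg_apply]
      linarith
  calc Φ t = exp (A t) * (exp (-A t) * Φ t) := by rw [← mul_assoc, ← exp_add]; simp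
    _ ≤ exp (A t) * (Φ s + ∫ u in s..t, exp (-A u) * b u) := by
        rw [hAs, neg_zero, exp_zero, one_mul] at hproduct
        gcongr
        linarith
    _ = _ := by
        rw [mul_add, ← intervalIntegral.integral_const_mul]
        simp only [hweight, mul_assoc, hAs, neg_zero, exp_zero, one_mul]

theorem integral_mul_add_le_of_le_mul_exp {w r Φ : ℝ → ℝ} {α k C M ε s t : ℝ} (hα : 0 < α)
    (hk : 0 ≤ k) (hC : 0 ≤ C) (hst : s ≤ t) (hw : ContinuousOn w (uIcc s t))
    (hw_nonneg : ∀ u ∈ Icc s t, 0 ≤ w u) (hw_le : ∀ u ∈ Icc s t, w u ≤ C * exp (α * u - α * t))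
    (hΦ : ContinuousOn Φ (uIcc s t)) (hΦ_nonneg : ∀ u ∈ Icc s t, 0 ≤ Φ u)
    (hΦ_le : ∀ u ∈ Icc s t, Φ u ≤ M) (hr : IntervalIntegrable r volume s t)
    (hrε : ∫ u in s..t, |r u| ≤ ε) :
    ∫ u in s..t, w u * (r u * Φ u + k) ≤ C * (M * ε + k / α) := by
  have hM : 0 ≤ M := (hΦ_nonneg s (left_mem_Icc.2 hst)).trans (hΦ_le s (left_mem_Icc.2 hst))
  have hexp_int : IntervalIntegrable (fun u => exp (α * u - α * t)) volume s t :=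
    (by fun_prop : Continuous fun u => exp (α * u - α * t)).intervalIntegrable _ _
  have hle : ∀ u ∈ Icc s t,
      w u * (r u * Φ u + k) ≤ C * (M * |r u| + k * exp (α * u - α * t)) := by
    intro u hu
    have hrΦ := mul_le_mul (le_abs_self (r u)) (hΦ_le u hu) (hΦ_nonneg u hu) (abs_nonneg _)
    have hwC : w u ≤ C := (hw_le u hu).trans (mul_le_of_le_one_right hC
      (exp_le_one_iff.2 (by nlinarith [hu.2])))
    calc w u * (r u * Φ u + k) ≤ w u * (M * |r u|) + w u * k := by
          rw [← mul_add]
          exact mul_le_mul_of_nonneg_left (by linarith) (hw_nonneg u hu)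
      _ ≤ C * (M * |r u|) + C * exp (α * u - α * t) * k := by
          gcongr
          exact hw_le u hu
      _ = C * (M * |r u| + k * exp (α * u - α * t)) := by ring
  calc ∫ u in s..t, w u * (r u * Φ u + k)
      ≤ ∫ u in s..t, C * (M * |r u| + k * exp (α * u - α * t)) :=
        intervalIntegral.integral_mono_on hst
          (((hr.mul_continuousOn hΦ).add intervalIntegrable_const).continuousOn_mul hw)
          (((hr.abs.const_mul M).add (hexp_int.const_mul k)).const_mul C) hle
    _ = C * (M * ∫ u in s..t, |r u|) + C * (k * ∫ u in s..t, exp (α * u - α * t)) := by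
        rw [intervalIntegral.integral_const_mul, intervalIntegral.integral_add
          (hr.abs.const_mul M) (hexp_int.const_mul k), intervalIntegral.integral_const_mul,
          intervalIntegral.integral_const_mul, mul_add]
    _ ≤ C * (M * ε) + C * (k * α⁻¹) := by
        gcongr
        exact integral_exp_mul_sub_le hα s t
    _ = C * (M * ε + k / α) := by ring

theorem gronwall_estimate_of_continuous_approx {Φ Φ' h g : ℝ → ℝ} {α k m ε M T : ℝ}
    (hα : 0 < α) (hk : 0 ≤ k) (hT : 0 ≤ T)
    (hΦnn : ∀ u ∈ Icc 0 T, 0 ≤ Φ u) (hΦM : ∀ u ∈ Icc 0 T, Φ u ≤ M)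
    (hΦ : ContinuousOn Φ (Icc 0 T))
    (hΦ' : ∀ u ∈ Ioo 0 T, HasDerivWithinAt Φ (Φ' u) (Ioi u) u)
    (hloc : IntervalIntegrable h volume 0 T)
    (hh : ∀ u ∈ Icc 0 T, ∫ τ in u..T, h τ ≤ α * (T - u) + m)
    (hineq : ∀ u ∈ Ioo 0 T, Φ' u + 2 * α * Φ u ≤ h u * Φ u + k)
    (hg : Continuous g) (hgh : ∫ u in 0..T, |h u - g u| ≤ ε) :
    Φ T ≤ exp (m + ε) * (exp (-α * T) * Φ 0 + (M * ε + k / α)) := by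
  set a : ℝ → ℝ := fun τ => g τ - 2 * α
  set w : ℝ → ℝ := fun u => exp (∫ τ in u..T, a τ)
  have hcont_a : Continuous a := hg.sub continuous_const
  have hw : ∀ u ∈ Icc 0 T, w u ≤ exp (m + ε) * exp (α * u - α * T) := by
    intro u hu
    have hloc_u : IntervalIntegrable h volume u T :=
      hloc.mono_set (by rw [uIcc_of_le hT, uIcc_of_le hu.2]; exact Icc_subset_Icc_left hu.1)
    have hgh_u : ∫ τ in u..T, |h τ - g τ| ≤ ε :=
      (intervalIntegral.integral_mono_interval hu.1 hu.2 le_rfl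
        (.of_forall fun _ => abs_nonneg _) (hloc.sub (hg.intervalIntegrable _ _)).abs).trans hgh
    have hg_u := intervalIntegral.integral_le_integral_add_of_integral_abs_sub_le hu.2 hloc_u
      (hg.intervalIntegrable _ _) hgh_u
    simp only [w, a]
    rw [← exp_add, exp_le_exp, intervalIntegral.integral_sub (hg.intervalIntegrable _ _)
      intervalIntegrable_const, intervalIntegral.integral_const, smul_eq_mul]
    linarith [hh u hu]
  have hvoc := le_exp_integral_mul_add_integral_of_hasDerivWithinAt (b := fun u =>
      (h u - g u) * Φ u + k) hT hcont_a
    (((hloc.sub (hg.intervalIntegrable _ _)).mul_continuousOn (by rwa [uIcc_of_le hT])).add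
      intervalIntegrable_const) hΦ hΦ' fun u hu => by simp only [a]; linarith [hineq u hu]
  have hintegral := integral_mul_add_le_of_le_mul_exp hα hk (exp_pos (m + ε)).le hT
    (intervalIntegral.continuousOn_primitive_interval_left hcont_a.integrableOn_uIcc).rexp
    (fun u _ => (exp_pos _).le) hw (by rwa [uIcc_of_le hT]) hΦnn hΦM
    (hloc.sub (hg.intervalIntegrable _ _)) hgh
  calc Φ T ≤ w 0 * Φ 0 + ∫ u in 0..T, w u * ((h u - g u) * Φ u + k) := hvoc
    _ ≤ exp (m + ε) * exp (-α * T) * Φ 0 + exp (m + ε) * (M * ε + k / α) := by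
        gcongr ?_ * _ + ?_
        · exact hΦnn 0 (left_mem_Icc.2 hT)
        · simpa using hw 0 (left_mem_Icc.2 hT)
    _ = _ := by ring

theorem gronwall_type_general (Φ Φ' h : ℝ → ℝ) (α k m : ℝ)
    (hα : 0 < α) (hk : 0 ≤ k)
    (hΦnn : ∀ t : ℝ, 0 ≤ t → 0 ≤ Φ t)
    (hderiv : ∀ t : ℝ, 0 ≤ t → HasDerivWithinAt Φ (Φ' t) (Set.Ici 0) t)
    (hloc : ∀ s t : ℝ, 0 ≤ s → s ≤ t → IntervalIntegrable h volume s t)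
    (hh : ∀ s t : ℝ, 0 ≤ s → s ≤ t → (∫ τ in s..t, h τ) ≤ α * (t - s) + m)
    (hineq : ∀ t : ℝ, 0 ≤ t → Φ' t + 2 * α * Φ t ≤ h t * Φ t + k) :
    ∀ t : ℝ, 0 ≤ t →
      Φ t ≤ Φ 0 * Real.exp m * Real.exp (-α * t) + k * Real.exp m / α := by
  intro T hT
  have hΦ : ContinuousOn Φ (Icc 0 T) := fun u hu =>
    ((hderiv u hu.1).continuousWithinAt).mono fun _ hx => hx.1
  obtain ⟨c, -, hc⟩ := isCompact_Icc.exists_isMaxOn (nonempty_Icc.2 hT) hΦ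
  have hest : ∀ ε > 0, Φ T ≤ exp (m + ε) * (exp (-α * T) * Φ 0 + (Φ c * ε + k / α)) := by
    intro ε hε
    obtain ⟨g, hg, hgh⟩ := (hloc 0 T le_rfl hT).exists_continuous_integral_abs_sub_le hT hε
    exact gronwall_estimate_of_continuous_approx hα hk hT (fun u hu => hΦnn u hu.1) hc hΦ
      (fun u hu => (hderiv u hu.1.le).mono fun _ hx => (hu.1.trans hx).le) (hloc 0 T le_rfl hT)
      (fun u hu => hh u T hu.1 hu.2) (fun u hu => hineq u hu.1.le) hg hgh
  have hlim : Tendsto (fun ε => exp (m + ε) * (exp (-α * T) * Φ 0 + (Φ c * ε + k / α)))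
      (𝓝[>] 0) (𝓝 (exp m * (exp (-α * T) * Φ 0 + k / α))) := by
    have hF : Continuous fun ε => exp (m + ε) * (exp (-α * T) * Φ 0 + (Φ c * ε + k / α)) := by
      fun_prop
    simpa using (hF.tendsto 0).mono_left nhdsWithin_le_nhds
  calc Φ T ≤ exp m * (exp (-α * T) * Φ 0 + k / α) :=
        ge_of_tendsto hlim (eventually_nhdsWithin_of_forall hest)
    _ = _ := by ring

/-- Gronwall-type lemma (Lemma 2.8 in the paper). -/
theorem gronwall_type (Φ Φ' h : ℝ → ℝ) (α k m : ℝ)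
    (hα : 0 < α) (hk : 0 ≤ k) (hm : 0 ≤ m)
    (hΦnn : ∀ t : ℝ, 0 ≤ t → 0 ≤ Φ t)
    (hderiv : ∀ t : ℝ, 0 ≤ t → HasDerivWithinAt Φ (Φ' t) (Set.Ici 0) t)
    (hloc : ∀ s t : ℝ, 0 ≤ s → s ≤ t → IntervalIntegrable h volume s t)
    (hh : ∀ s t : ℝ, 0 ≤ s → s ≤ t → (∫ τ in s..t, h τ) ≤ α * (t - s) + m)
    (hineq : ∀ t : ℝ, 0 ≤ t → Φ' t + 2 * α * Φ t ≤ h t * Φ t + k) :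
    ∀ t : ℝ, 0 ≤ t →
      Φ t ≤ Φ 0 * Real.exp m * Real.exp (-α * t) + k * Real.exp m / α :=
  gronwall_type_general Φ Φ' h α k m hα hk hΦnn hderiv hloc hh hineq
end
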